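/- arXiv:2410.07478 — 3 statements merged into one kernel-verified Lean document; each statement's English description precedes it below -/
import Mathlib

section
/- For any nonempty proper subset S of pairs {(i,j) : 1 ≤ i < j ≤ ℓ}, the function obtained by applying the operator ∏_{(i,j) ∉ S} (∂_{μ_i} - ∂_{μ_j}) to the Vandermonde polynomial Δ_ℓ vanishes at every point where μ_1 = μ_2 = ... = μ_ℓ. -/
/-- The Vandermonde polynomial `Δ_n(μ) = ∏_{i<j} (μ j - μ i)` as a function. -/
noncomputable def vdet {n : ℕ} (z : Fin n → ℂ) : ℂ :=
  ∏ p ∈ Finset.univ.filter (fun p : Fin n × Fin n => p.1 < p.2), (z p.2 - z p.1)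

/-- The operator `∂_{μ_i} - ∂_{μ_j}`. -/
noncomputable def dPair {n : ℕ} (i j : Fin n) (f : (Fin n → ℂ) → ℂ) : (Fin n → ℂ) → ℂ :=
  fun x => fderiv ℂ f x (Pi.single i 1) - fderiv ℂ f x (Pi.single j 1)

/-- The composition of `∂_{μ_i} - ∂_{μ_j}` over a finite set of pairs `(i,j)`. -/
noncomputable def pairOp {n : ℕ} (T : Finset (Fin n × Fin n)) (f : (Fin n → ℂ) → ℂ) :
    (Fin n → ℂ) → ℂ :=
  T.toList.foldr (fun p g => dPair p.1 p.2 g) f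

/-!
The point `c = (μ, …, μ)` is a zero of each linear factor `μ_j - μ_i`, `(i, j) ∈ F = {i < j}`,
of `Δ_ℓ`, so `Δ_ℓ` lies in `I ^ |F|`, where `I` is the ideal of polynomials vanishing at `c`. Each
`∂_{μ_i} - ∂_{μ_j}` is a derivation, and by the Leibniz rule a derivation maps `I ^ (r + 1)`
into `I ^ r`. Applying the `|F| - |S| < |F|` operators therefore leaves a polynomial in `I`,
which vanishes at `c`. On polynomial functions `fderiv` agrees with the formal partial
derivatives, which transfers this algebraic statement to the analytic operator.
-/

open MvPolynomial

namespace MvPolynomial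

variable {𝕜 σ : Type*} [NontriviallyNormedField 𝕜] [Fintype σ]

noncomputable def gradEval (p : MvPolynomial σ 𝕜) (x : σ → 𝕜) : (σ → 𝕜) →L[𝕜] 𝕜 :=
  ∑ i, eval x (pderiv i p) • ContinuousLinearMap.proj i

@[simp]
theorem gradEval_apply (p : MvPolynomial σ 𝕜) (x v : σ → 𝕜) :
    gradEval p x v = ∑ i, eval x (pderiv i p) * v i := by
  simp [gradEval]

theorem gradEval_add (p q : MvPolynomial σ 𝕜) (x : σ → 𝕜) :
    gradEval (p + q) x = gradEval p x + gradEval q x := by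
  ext v
  simp [add_mul, Finset.sum_add_distrib]

theorem gradEval_mul (p q : MvPolynomial σ 𝕜) (x : σ → 𝕜) :
    gradEval (p * q) x = eval x p • gradEval q x + eval x q • gradEval p x := by
  ext v
  simp only [gradEval_apply, pderiv_mul, map_add, map_mul, add_mul, Finset.sum_add_distrib,
    _root_.add_apply, _root_.smul_apply, smul_eq_mul, Finset.mul_sum]
  rw [add_comm]
  congr 1 <;> exact Finset.sum_congr rfl fun _ _ => by ring

theorem gradEval_X (i : σ) (x : σ → 𝕜) :
    gradEval (X i) x = ContinuousLinearMap.proj i := by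
  classical
  ext v
  simp [Pi.single_apply]

theorem hasFDerivAt_eval (p : MvPolynomial σ 𝕜) (x : σ → 𝕜) :
    HasFDerivAt (fun y => eval y p) (gradEval p x) x := by
  induction p using MvPolynomial.induction_on with
  | C a =>
    simp only [eval_C]
    rw [show gradEval (C a) x = 0 by ext; simp]
    exact hasFDerivAt_const a x
  | add p q hp hq =>
    simp only [map_add]
    rw [gradEval_add]
    exact hp.add hq
  | mul_X p i hp =>
    simp only [map_mul, eval_X]
    rw [gradEval_mul, gradEval_X, eval_X]
    exact hp.mul (hasFDerivAt_apply i x)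

theorem fderiv_eval_apply_single [DecidableEq σ] (p : MvPolynomial σ 𝕜) (x : σ → 𝕜) (i : σ) :
    fderiv 𝕜 (fun y => eval y p) x (Pi.single i 1) = eval x (pderiv i p) := by
  simp [(hasFDerivAt_eval p x).fderiv, Pi.single_apply]

end MvPolynomial

namespace Derivation

variable {R A : Type*} [CommSemiring R] [CommSemiring A] [Algebra R A]

theorem map_mem_pow_of_mem_pow_succ (D : Derivation R A A) (I : Ideal A) {r : ℕ} {a : A}
    (ha : a ∈ I ^ (r + 1)) : D a ∈ I ^ r := by
  induction r generalizing a with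
  | zero => simp
  | succ r ih =>
    rw [pow_succ] at ha
    refine Submodule.mul_induction_on ha (fun b hb c hc => ?_) (fun b c hb hc => ?_)
    · rw [leibniz, smul_eq_mul, smul_eq_mul]
      refine add_mem (Ideal.mul_mem_right _ _ hb) ?_
      rw [pow_succ]
      exact Ideal.mul_mem_mul_rev (ih hb) hc
    · rw [map_add]
      exact add_mem hb hc

theorem foldr_mem_pow {α : Type*} (D : α → Derivation R A A) (I : Ideal A) (l : List α)
    {r : ℕ} {a : A} (ha : a ∈ I ^ (r + l.length)) : l.foldr (fun i b => D i b) a ∈ I ^ r := by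
  induction l generalizing r with
  | nil => simpa using ha
  | cons i l ih =>
    rw [List.length_cons, ← add_assoc, add_right_comm] at ha
    exact map_mem_pow_of_mem_pow_succ (D i) I (ih ha)

end Derivation

noncomputable def pairDerivation {σ R : Type*} [CommRing R] (i j : σ) :
    Derivation R (MvPolynomial σ R) (MvPolynomial σ R) :=
  pderiv i - pderiv j

theorem dPair_eval {n : ℕ} (i j : Fin n) (q : MvPolynomial (Fin n) ℂ) :
    dPair i j (fun y => eval y q) = fun y => eval y (pairDerivation i j q) := by
  funext y
  simp [dPair, pairDerivation, fderiv_eval_apply_single]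

theorem pairOp_eval {n : ℕ} (T : Finset (Fin n × Fin n)) (q : MvPolynomial (Fin n) ℂ) :
    pairOp T (fun y => eval y q) =
      fun y => eval y (T.toList.foldr (fun p r => pairDerivation p.1 p.2 r) q) := by
  unfold pairOp
  induction T.toList with
  | nil => rfl
  | cons p l ih => simp only [List.foldr_cons, ih, dPair_eval]

noncomputable def vandermondePoly (n : ℕ) (R : Type*) [CommRing R] : MvPolynomial (Fin n) R :=
  ∏ p ∈ Finset.univ.filter (fun p : Fin n × Fin n => p.1 < p.2), (X p.2 - X p.1)

theorem vdet_eq_eval {n : ℕ} : vdet (n := n) = fun z => eval z (vandermondePoly n ℂ) := by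
  funext z
  simp [vdet, vandermondePoly]

theorem vandermondePoly_mem_pow_ker_eval_const (n : ℕ) {R : Type*} [CommRing R] (μ : R) :
    vandermondePoly n R ∈ RingHom.ker (eval fun _ : Fin n => μ) ^
      (Finset.univ.filter (fun p : Fin n × Fin n => p.1 < p.2)).card := by
  rw [← Finset.prod_const]
  exact Ideal.prod_mem_prod fun p _ => by simp [RingHom.mem_ker]

/-- For a nonempty proper subset `S` of the pairs `{(i,j) : i < j}`, applying
`∏_{(i,j) ∉ S} (∂_{μ_i} - ∂_{μ_j})` to `Δ_ℓ` yields a function vanishing on the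
diagonal `μ_1 = ⋯ = μ_ℓ`. -/
theorem partial_vandermonde_op_vanishes_on_diagonal (ℓ : ℕ)
    (S : Finset (Fin ℓ × Fin ℓ)) (hne : S.Nonempty)
    (hproper : S ⊂ Finset.univ.filter (fun p : Fin ℓ × Fin ℓ => p.1 < p.2)) (μ : ℂ) :
    pairOp ((Finset.univ.filter (fun p : Fin ℓ × Fin ℓ => p.1 < p.2)) \ S) vdet
      (fun _ => μ) = 0 := by
  set F := Finset.univ.filter (fun p : Fin ℓ × Fin ℓ => p.1 < p.2)
  set I := RingHom.ker (eval (fun _ : Fin ℓ => μ))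
  have hV : vandermondePoly ℓ ℂ ∈ I ^ (S.card + (F \ S).toList.length) := by
    rw [Finset.length_toList, add_comm, Finset.card_sdiff_add_card_eq_card hproper.subset]
    exact vandermondePoly_mem_pow_ker_eval_const ℓ μ
  have hT := Derivation.foldr_mem_pow (fun p => pairDerivation p.1 p.2) I _ hV
  rw [vdet_eq_eval, pairOp_eval, ← RingHom.mem_ker]
  exact Ideal.pow_le_self hne.card_pos.ne' hT
end

section
/- Mehler's formula: for real x, y and |ρ| < 1, Σ_{k=0}^∞ (ρ^k / (2^k k!)) H_k(x) H_k(y) = (1 - ρ²)^{-1/2} exp( -(ρ²(x² + y²) - 2ρxy) / (1 - ρ²) ), where H_k is the k-th (physicists') Hermite polynomial. -/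
/-!
Write `F(x, y)` for the series. Differentiating termwise, `H_k' = 2k H_{k-1}` and
`H_{k+1}(y) = 2y H_k(y) - H_k'(y)` give `∂ₓF = 2ρy F - ρ ∂_y F`, and symmetrically
`∂_y F = 2ρx F - ρ ∂ₓF`. Eliminating `∂_y F` leaves the linear ODE `(1 - ρ²) ∂ₓF = 2ρ(y - ρx) F`,
so `F` is a Gaussian in `x` (and, by symmetry, in `y`) times `F(0, 0)`. Since `H_k(0)` vanishes
for odd `k` and `H_{2m+2}(0) = -2(2m+1) H_{2m}(0)`, the series `F(0, 0)` is the binomial series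
of `(1 - ρ²)^{-1/2}`. Termwise differentiation is justified by a bound
`|H_k(x)| ≤ √(2^k k!) ∏_{j<k} (1 + 2|x|/√(2(j+1)))`, whose product grows subexponentially.
-/

/-- The physicists' Hermite polynomials, `H_0 = 1`, `H_{k+1} = 2x H_k - H_k'`. -/
noncomputable def hermiteH : ℕ → Polynomial ℝ
  | 0 => 1
  | n + 1 => Polynomial.C 2 * Polynomial.X * hermiteH n - Polynomial.derivative (hermiteH n)

open Polynomial Filter Topology Finset
open scoped Nat

lemma hermiteH_zero : hermiteH 0 = 1 := by rw [hermiteH]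

lemma hermiteH_succ (n : ℕ) :
    hermiteH (n + 1) = C 2 * X * hermiteH n - derivative (hermiteH n) := by
  rw [hermiteH]

lemma derivative_hermiteH_succ (n : ℕ) :
    derivative (hermiteH (n + 1)) = C (2 * (n + 1 : ℝ)) * hermiteH n := by
  induction n with
  | zero => simp [hermiteH_succ, hermiteH_zero]
  | succ n ih =>
    rw [hermiteH_succ (n + 1), derivative_sub, derivative_mul, ih, derivative_mul,
      derivative_mul, derivative_C, derivative_C, derivative_X, hermiteH_succ n]
    simp only [map_mul, map_add, map_natCast, map_ofNat, map_one]
    push_cast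
    ring

lemma eval_hermiteH_succ_succ (n : ℕ) (x : ℝ) :
    (hermiteH (n + 2)).eval x =
      2 * x * (hermiteH (n + 1)).eval x - 2 * (n + 1) * (hermiteH n).eval x := by
  simp [hermiteH_succ (n + 1), derivative_hermiteH_succ]

noncomputable def hermiteScale (k : ℕ) : ℝ := √(2 ^ k * k !)

/-- Divided by `hermiteScale`, the three-term recurrence increases the running maximum of
`|H_j(x)| / √(2^j j!)` at step `k` by a factor of at most `1 + 2|x| / √(2(k+1))`. -/
noncomputable def hermiteGrowth (a : ℝ) (k : ℕ) : ℝ := ∏ j ∈ range k, (1 + 2 * a / √(2 * (j + 1)))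

lemma hermiteScale_pos (k : ℕ) : 0 < hermiteScale k := Real.sqrt_pos.mpr (by positivity)

lemma hermiteScale_nonneg (k : ℕ) : 0 ≤ hermiteScale k := (hermiteScale_pos k).le

lemma hermiteScale_sq (k : ℕ) : hermiteScale k ^ 2 = 2 ^ k * k ! :=
  Real.sq_sqrt (by positivity)

lemma hermiteScale_succ (k : ℕ) : hermiteScale (k + 1) = √(2 * (k + 1)) * hermiteScale k := by
  rw [hermiteScale, hermiteScale, ← Real.sqrt_mul (by positivity), Nat.factorial_succ]
  congr 1
  push_cast
  ring

lemma hermiteGrowth_succ (a : ℝ) (k : ℕ) :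
    hermiteGrowth a (k + 1) = hermiteGrowth a k * (1 + 2 * a / √(2 * (k + 1))) := by
  simp [hermiteGrowth, prod_range_succ]

lemma one_le_hermiteGrowth {a : ℝ} (ha : 0 ≤ a) (k : ℕ) : 1 ≤ hermiteGrowth a k :=
  Finset.one_le_prod fun j _ => le_add_of_nonneg_right (by positivity)

lemma hermiteGrowth_pos {a : ℝ} (ha : 0 ≤ a) (k : ℕ) : 0 < hermiteGrowth a k :=
  zero_lt_one.trans_le (one_le_hermiteGrowth ha k)

lemma hermiteGrowth_le_succ {a : ℝ} (ha : 0 ≤ a) (k : ℕ) :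
    hermiteGrowth a k ≤ hermiteGrowth a (k + 1) := by
  rw [hermiteGrowth_succ]
  exact le_mul_of_one_le_right (hermiteGrowth_pos ha k).le (le_add_of_nonneg_right (by positivity))

lemma hermiteGrowth_mono {a b : ℝ} (ha : 0 ≤ a) (hab : a ≤ b) (k : ℕ) :
    hermiteGrowth a k ≤ hermiteGrowth b k :=
  prod_le_prod (fun j _ => by positivity) fun j _ => by gcongr

lemma abs_eval_hermiteH_le {x a : ℝ} (hx : |x| ≤ a) (k : ℕ) :
    |(hermiteH k).eval x| ≤ hermiteScale k * hermiteGrowth a k := by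
  have ha : 0 ≤ a := (abs_nonneg x).trans hx
  induction k using Nat.twoStepInduction with
  | zero => simp [hermiteH_zero, hermiteScale, hermiteGrowth]
  | one =>
    have h : √2 * (2 * a / √2) = 2 * a := mul_div_cancel₀ _ (by positivity)
    simp only [hermiteH_succ, hermiteH_zero, derivative_one, sub_zero, mul_one, eval_mul, eval_C,
      eval_X, abs_mul, abs_two, hermiteScale, hermiteGrowth, zero_add, pow_one,
      Nat.factorial_one, Nat.cast_one, range_one, prod_singleton, CharP.cast_eq_zero]
    rw [mul_add, mul_one, h]
    linarith [Real.sqrt_nonneg 2]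
  | more n ih₀ ih₁ =>
    have hQ := hermiteGrowth_le_succ ha n
    have hσ : 2 * (n + 1 : ℝ) ≤ √(2 * (n + 1)) * √(2 * (n + 2)) := by
      have h := Real.mul_self_sqrt (by positivity : (0:ℝ) ≤ 2 * (n + 1))
      have h' : √(2 * (n + 1 : ℝ)) ≤ √(2 * (n + 2)) := Real.sqrt_le_sqrt (by linarith)
      nlinarith [Real.sqrt_nonneg (2 * (n + 1 : ℝ))]
    have := hermiteScale_nonneg n
    have := hermiteScale_nonneg (n + 1)
    have := hermiteGrowth_pos ha n
    have := hermiteGrowth_pos ha (n + 1)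
    calc |(hermiteH (n + 2)).eval x|
        ≤ 2 * |x| * |(hermiteH (n + 1)).eval x| + 2 * (n + 1) * |(hermiteH n).eval x| := by
          rw [eval_hermiteH_succ_succ]
          refine (abs_sub _ _).trans_eq ?_
          simp only [abs_mul, abs_two, abs_of_nonneg (by positivity : (0:ℝ) ≤ n + 1)]
      _ ≤ 2 * a * (hermiteScale (n + 1) * hermiteGrowth a (n + 1)) +
            √(2 * (n + 1)) * √(2 * (n + 2)) * (hermiteScale n * hermiteGrowth a (n + 1)) := by
          gcongr
          exact ih₀.trans (by gcongr)
      _ = hermiteScale (n + 2) * hermiteGrowth a (n + 2) := by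
          rw [hermiteScale_succ (n + 1), hermiteScale_succ n, hermiteGrowth_succ _ (n + 1)]
          push_cast
          rw [show (n : ℝ) + 1 + 1 = n + 2 by ring]
          have : √(2 * (n + 2 : ℝ)) ≠ 0 := by positivity
          field_simp
          ring

lemma summable_hermiteMajorant {r a : ℝ} (hr0 : 0 < r) (hr1 : r < 1) (ha : 0 ≤ a) :
    Summable fun k : ℕ => (k + 1) * r ^ k * hermiteGrowth a k ^ 2 := by
  have hpos (k : ℕ) : 0 < (k + 1) * r ^ k * hermiteGrowth a k ^ 2 := by
    have := hermiteGrowth_pos ha k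
    positivity
  refine summable_of_ratio_test_tendsto_lt_one hr1 (.of_forall fun k => (hpos k).ne') ?_
  have hratio (k : ℕ) :
      ‖((k + 1 : ℕ) + 1) * r ^ (k + 1) * hermiteGrowth a (k + 1) ^ 2‖ /
          ‖(k + 1) * r ^ k * hermiteGrowth a k ^ 2‖ =
        r * ((2 + 1 * k) / (1 + 1 * k)) * (1 + 2 * a / √(2 * (k + 1))) ^ 2 := by
    have := (hermiteGrowth_pos ha k).ne'
    have := (pow_pos hr0 k).ne'
    rw [Real.norm_of_nonneg (hpos _).le, Real.norm_of_nonneg (hpos k).le, hermiteGrowth_succ]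
    field_simp
    push_cast
    ring
  have hfrac : Tendsto (fun k : ℕ => 2 * a / √(2 * (k + 1))) atTop (𝓝 0) :=
    tendsto_const_nhds.div_atTop (Real.tendsto_sqrt_atTop.comp
      (Tendsto.const_mul_atTop two_pos
        (tendsto_atTop_add_const_right _ 1 tendsto_natCast_atTop_atTop)))
  simp_rw [hratio]
  simpa using ((tendsto_add_mul_div_add_mul_atTop_nhds 2 1 1 one_ne_zero).const_mul r).mul
    ((hfrac.const_add 1).pow 2)

noncomputable def mehlerTerm (ρ x y : ℝ) (k : ℕ) : ℝ :=
  ρ ^ k / (2 ^ k * (k ! : ℝ)) * (hermiteH k).eval x * (hermiteH k).eval y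

noncomputable def mehlerDerivTerm (ρ x y : ℝ) (k : ℕ) : ℝ :=
  ρ ^ k / (2 ^ k * (k ! : ℝ)) * (derivative (hermiteH k)).eval x * (hermiteH k).eval y

noncomputable def mehlerKernel (ρ x y : ℝ) : ℝ := ∑' k, mehlerTerm ρ x y k

lemma mehlerDerivTerm_zero (ρ x y : ℝ) : mehlerDerivTerm ρ x y 0 = 0 := by
  simp [mehlerDerivTerm, hermiteH_zero]

lemma mehlerDerivTerm_succ_eq (ρ x y : ℝ) (k : ℕ) :
    mehlerDerivTerm ρ x y (k + 1) =
      ρ ^ (k + 1) / (2 ^ k * k !) * (hermiteH k).eval x * (hermiteH (k + 1)).eval y := by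
  rw [mehlerDerivTerm, derivative_hermiteH_succ, eval_mul, eval_C, Nat.factorial_succ]
  push_cast
  field_simp
  ring

section Bounds

variable {ρ r a x y : ℝ}

lemma abs_mehlerTerm_le (hρ : |ρ| ≤ r) (hx : |x| ≤ a) (hy : |y| ≤ a) (k : ℕ) :
    |mehlerTerm ρ x y k| ≤ (k + 1) * r ^ k * hermiteGrowth a k ^ 2 := by
  have hr0 : 0 ≤ r := (abs_nonneg ρ).trans hρ
  have hS := hermiteScale_pos k
  have hr : |ρ| ^ k ≤ r ^ k := pow_le_pow_left₀ (abs_nonneg ρ) hρ k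
  have hxy := mul_le_mul (abs_eval_hermiteH_le hx k)
    (abs_eval_hermiteH_le hy k) (abs_nonneg _)
    (mul_nonneg hS.le (hermiteGrowth_pos ((abs_nonneg x).trans hx) k).le)
  calc |mehlerTerm ρ x y k|
      = |ρ| ^ k * (|(hermiteH k).eval x| * |(hermiteH k).eval y|) / hermiteScale k ^ 2 := by
        rw [mehlerTerm, hermiteScale_sq, abs_mul, abs_mul, abs_div, abs_pow,
          abs_of_pos (by positivity : (0 : ℝ) < 2 ^ k * k !)]
        ring
    _ ≤ r ^ k * ((hermiteScale k * hermiteGrowth a k) * (hermiteScale k * hermiteGrowth a k)) /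
          hermiteScale k ^ 2 := by
        gcongr
    _ = 1 * r ^ k * hermiteGrowth a k ^ 2 := by field_simp
    _ ≤ (k + 1) * r ^ k * hermiteGrowth a k ^ 2 := by
        gcongr
        linarith [(k.cast_nonneg : (0:ℝ) ≤ k)]

lemma abs_mehlerDerivTerm_le (hρ : |ρ| ≤ r) (hx : |x| ≤ a) (hy : |y| ≤ a) (k : ℕ) :
    |mehlerDerivTerm ρ x y k| ≤ (k + 1) * r ^ k * hermiteGrowth a k ^ 2 := by
  have hr : 0 ≤ r := (abs_nonneg ρ).trans hρ
  have ha : 0 ≤ a := (abs_nonneg x).trans hx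
  rcases k with _ | m
  · rw [mehlerDerivTerm_zero, abs_zero]
    positivity
  have hS := hermiteScale_pos m
  have hQ := hermiteGrowth_le_succ ha m
  have hxy := mul_le_mul (abs_eval_hermiteH_le hx m)
    (abs_eval_hermiteH_le hy (m + 1)) (abs_nonneg _)
    (mul_nonneg hS.le (hermiteGrowth_pos ha m).le)
  have hσ : √(2 * (m + 1) : ℝ) ≤ m + 2 :=
    Real.sqrt_le_iff.mpr ⟨by positivity, by nlinarith⟩
  calc |mehlerDerivTerm ρ x y (m + 1)|
      = |ρ| ^ (m + 1) * (|(hermiteH m).eval x| * |(hermiteH (m + 1)).eval y|) /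
          hermiteScale m ^ 2 := by
        rw [mehlerDerivTerm_succ_eq, hermiteScale_sq, abs_mul, abs_mul, abs_div, abs_pow,
          abs_of_pos (by positivity : (0 : ℝ) < 2 ^ m * m !)]
        ring
    _ ≤ r ^ (m + 1) * ((hermiteScale m * hermiteGrowth a m) *
          (hermiteScale (m + 1) * hermiteGrowth a (m + 1))) / hermiteScale m ^ 2 := by
        gcongr
    _ = r ^ (m + 1) * √(2 * (m + 1)) * hermiteGrowth a m * hermiteGrowth a (m + 1) := by
        rw [hermiteScale_succ]
        field_simp
    _ ≤ r ^ (m + 1) * (m + 2) * hermiteGrowth a (m + 1) * hermiteGrowth a (m + 1) := by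
        have := hermiteGrowth_pos ha m
        have := hermiteGrowth_pos ha (m + 1)
        gcongr
    _ = ((m + 1 : ℕ) + 1) * r ^ (m + 1) * hermiteGrowth a (m + 1) ^ 2 := by
        push_cast
        ring

end Bounds

lemma exists_summable_hermiteMajorant {ρ : ℝ} (hρ : |ρ| < 1) {a : ℝ} (ha : 0 ≤ a) :
    ∃ r, |ρ| ≤ r ∧ Summable fun k : ℕ => (k + 1) * r ^ k * hermiteGrowth a k ^ 2 := by
  obtain ⟨r, hρr, hr1⟩ := exists_between hρ
  exact ⟨r, hρr.le, summable_hermiteMajorant ((abs_nonneg ρ).trans_lt hρr) hr1 ha⟩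

lemma summable_mehlerTerm {ρ : ℝ} (hρ : |ρ| < 1) (x y : ℝ) : Summable (mehlerTerm ρ x y) := by
  obtain ⟨r, hρr, hsum⟩ := exists_summable_hermiteMajorant hρ (le_max_left 0 (max |x| |y|))
  refine .of_norm_bounded hsum fun k => abs_mehlerTerm_le hρr ?_ ?_ k <;> simp

lemma summable_mehlerDerivTerm {ρ : ℝ} (hρ : |ρ| < 1) (x y : ℝ) :
    Summable (mehlerDerivTerm ρ x y) := by
  obtain ⟨r, hρr, hsum⟩ := exists_summable_hermiteMajorant hρ (le_max_left 0 (max |x| |y|))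
  refine .of_norm_bounded hsum fun k => abs_mehlerDerivTerm_le hρr ?_ ?_ k <;> simp

lemma hasDerivAt_mehlerKernel_tsum {ρ : ℝ} (hρ : |ρ| < 1) (x y : ℝ) :
    HasDerivAt (fun t => mehlerKernel ρ t y) (∑' k, mehlerDerivTerm ρ x y k) x := by
  obtain ⟨r, hρr, hsum⟩ :=
    exists_summable_hermiteMajorant hρ (by positivity : 0 ≤ |x| + |y| + 1)
  have hx : x ∈ Metric.ball 0 (|x| + |y| + 1) := by
    rw [mem_ball_zero_iff, Real.norm_eq_abs]
    linarith [abs_nonneg y]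
  refine hasDerivAt_tsum_of_isPreconnected (g := fun k t => mehlerTerm ρ t y k)
    (g' := fun k t => mehlerDerivTerm ρ t y k) hsum Metric.isOpen_ball
    (convex_ball 0 _).isPreconnected (fun k t _ => ?_) (fun k t ht => ?_) hx
    (summable_mehlerTerm hρ x y) hx
  · exact (((hermiteH k).hasDerivAt t).const_mul _).mul_const _
  · rw [mem_ball_zero_iff, Real.norm_eq_abs] at ht
    exact abs_mehlerDerivTerm_le hρr ht.le (by linarith [abs_nonneg x]) k

lemma mehlerDerivTerm_succ (ρ x y : ℝ) (k : ℕ) :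
    mehlerDerivTerm ρ x y (k + 1) =
      2 * ρ * y * mehlerTerm ρ x y k - ρ * mehlerDerivTerm ρ y x k := by
  rw [mehlerDerivTerm_succ_eq, hermiteH_succ, mehlerTerm, mehlerDerivTerm]
  simp only [eval_sub, eval_mul, eval_C, eval_X]
  ring

lemma mehlerKernel_comm (ρ x y : ℝ) : mehlerKernel ρ x y = mehlerKernel ρ y x :=
  tsum_congr fun k => by rw [mehlerTerm, mehlerTerm]; ring

lemma tsum_mehlerDerivTerm {ρ : ℝ} (hρ : |ρ| < 1) (x y : ℝ) :
    ∑' k, mehlerDerivTerm ρ x y k =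
      2 * ρ * y * mehlerKernel ρ x y - ρ * ∑' k, mehlerDerivTerm ρ y x k := by
  rw [(summable_mehlerDerivTerm hρ x y).tsum_eq_zero_add, mehlerDerivTerm_zero, zero_add,
    tsum_congr (mehlerDerivTerm_succ ρ x y), mehlerKernel,
    ((summable_mehlerTerm hρ x y).mul_left _).tsum_sub
      ((summable_mehlerDerivTerm hρ y x).mul_left _), tsum_mul_left, tsum_mul_left]

lemma hasDerivAt_mehlerKernel {ρ : ℝ} (hρ : |ρ| < 1) (x y : ℝ) :
    HasDerivAt (fun t => mehlerKernel ρ t y)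
      (2 * ρ * (y - ρ * x) / (1 - ρ ^ 2) * mehlerKernel ρ x y) x := by
  have hρ2 : 1 - ρ ^ 2 ≠ 0 := by
    have := sq_lt_one_iff_abs_lt_one ρ |>.mpr hρ
    linarith
  convert hasDerivAt_mehlerKernel_tsum hρ x y using 1
  have hxy := tsum_mehlerDerivTerm hρ x y
  have hyx := tsum_mehlerDerivTerm hρ y x
  rw [mehlerKernel_comm ρ y x] at hyx
  field_simp
  linear_combination ρ * hyx - hxy

lemma eq_mul_exp_sub_of_hasDerivAt {f g g' : ℝ → ℝ} (hf : ∀ x, HasDerivAt f (g' x * f x) x)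
    (hg : ∀ x, HasDerivAt g (g' x) x) (x a : ℝ) : f x = f a * Real.exp (g x - g a) := by
  have hderiv (t : ℝ) : HasDerivAt (fun t => f t * Real.exp (-g t)) 0 t :=
    ((hf t).mul (hg t).neg.exp).congr_deriv (by ring)
  have hconst := is_const_of_deriv_eq_zero (fun t => (hderiv t).differentiableAt)
    (fun t => (hderiv t).deriv) x a
  calc f x = f x * Real.exp (-g x) * Real.exp (g x) := by
        rw [mul_assoc, ← Real.exp_add, neg_add_cancel, Real.exp_zero, mul_one]
    _ = f a * Real.exp (g x - g a) := by
        rw [hconst, mul_assoc, ← Real.exp_add, neg_add_eq_sub]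

lemma mehlerKernel_eq_mul_exp {ρ : ℝ} (hρ : |ρ| < 1) (x y : ℝ) :
    mehlerKernel ρ x y =
      mehlerKernel ρ 0 y * Real.exp ((2 * ρ * x * y - ρ ^ 2 * x ^ 2) / (1 - ρ ^ 2)) := by
  have hg (t : ℝ) : HasDerivAt (fun t => (2 * ρ * t * y - ρ ^ 2 * t ^ 2) / (1 - ρ ^ 2))
      (2 * ρ * (y - ρ * t) / (1 - ρ ^ 2)) t :=
    (((((hasDerivAt_id t).const_mul (2 * ρ)).mul_const y).sub
      ((hasDerivAt_pow 2 t).const_mul (ρ ^ 2))).div_const (1 - ρ ^ 2)).congr_deriv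
        (by simp only [mul_one, Nat.cast_ofNat, Nat.add_one_sub_one, pow_one]; ring)
  simpa using eq_mul_exp_sub_of_hasDerivAt (hasDerivAt_mehlerKernel hρ · y) hg x 0

lemma eval_hermiteH_two_mul_add_one_zero (m : ℕ) : (hermiteH (2 * m + 1)).eval 0 = 0 := by
  induction m with
  | zero => simp [hermiteH_succ, hermiteH_zero]
  | succ m ih =>
    rw [show 2 * (m + 1) + 1 = 2 * m + 1 + 2 by ring, eval_hermiteH_succ_succ, ih]
    ring

lemma Ring.multichoose_succ_mul {R : Type*} [Field R] [CharZero R] (r : R) (n : ℕ) :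
    Ring.multichoose r (n + 1) * (n + 1) = Ring.multichoose r n * (r + n) := by
  have h := Ring.factorial_nsmul_multichoose_eq_ascPochhammer r n
  have h1 := Ring.factorial_nsmul_multichoose_eq_ascPochhammer r (n + 1)
  rw [Polynomial.ascPochhammer_smeval_eq_eval] at h h1
  rw [ascPochhammer_succ_eval, ← h, Nat.factorial_succ] at h1
  simp only [nsmul_eq_mul] at h h1
  have hn : (n ! : R) ≠ 0 := Nat.cast_ne_zero.mpr n.factorial_ne_zero
  push_cast at h1
  apply mul_left_cancel₀ hn
  linear_combination h1

lemma eval_hermiteH_two_mul_zero_sq_div (m : ℕ) :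
    (hermiteH (2 * m)).eval 0 ^ 2 / (2 ^ (2 * m) * (2 * m)! : ℝ) =
      Ring.multichoose (1 / 2 : ℝ) m := by
  induction m with
  | zero => simp [hermiteH_zero]
  | succ m ih =>
    have hm : (m + 1 : ℝ) ≠ 0 := by positivity
    rw [← mul_left_inj' hm, Ring.multichoose_succ_mul, ← ih,
      show 2 * (m + 1) = 2 * m + 2 by ring, eval_hermiteH_succ_succ,
      eval_hermiteH_two_mul_add_one_zero, Nat.factorial_succ, Nat.factorial_succ]
    push_cast
    field_simp
    ring

lemma hasSum_multichoose_half_mul_pow {s : ℝ} (hs : |s| < 1) :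
    HasSum (fun n => Ring.multichoose (1 / 2 : ℝ) n * s ^ n) (√(1 - s))⁻¹ := by
  have h := (Real.one_div_one_sub_rpow_hasFPowerSeriesOnBall_zero (1 / 2 : ℝ)).hasSum
    (y := s) (by simpa [enorm_eq_nnnorm, ← NNReal.coe_lt_coe] using hs)
  simp only [FormalMultilinearSeries.ofScalars_apply_eq, smul_eq_mul, zero_add] at h
  rw [Real.sqrt_eq_rpow, ← one_div]
  simpa only [Ring.multichoose_eq] using h

lemma mehlerTerm_zero_zero_two_mul (ρ : ℝ) (m : ℕ) :
    mehlerTerm ρ 0 0 (2 * m) = Ring.multichoose (1 / 2 : ℝ) m * (ρ ^ 2) ^ m := by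
  rw [mehlerTerm, ← eval_hermiteH_two_mul_zero_sq_div, ← pow_mul]
  ring

lemma mehlerTerm_zero_zero_two_mul_add_one (ρ : ℝ) (m : ℕ) :
    mehlerTerm ρ 0 0 (2 * m + 1) = 0 := by
  simp [mehlerTerm, eval_hermiteH_two_mul_add_one_zero]

lemma mehlerKernel_zero_zero {ρ : ℝ} (hρ : |ρ| < 1) : mehlerKernel ρ 0 0 = (√(1 - ρ ^ 2))⁻¹ := by
  have heven : HasSum (fun m => mehlerTerm ρ 0 0 (2 * m)) (√(1 - ρ ^ 2))⁻¹ := by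
    simp_rw [mehlerTerm_zero_zero_two_mul]
    refine hasSum_multichoose_half_mul_pow ?_
    rw [abs_pow]
    exact pow_lt_one₀ (abs_nonneg ρ) hρ two_ne_zero
  have hodd : HasSum (fun m => mehlerTerm ρ 0 0 (2 * m + 1)) 0 := by
    simp_rw [mehlerTerm_zero_zero_two_mul_add_one]
    exact hasSum_zero
  rw [← add_zero (√(1 - ρ ^ 2))⁻¹]
  exact (heven.even_add_odd hodd).tsum_eq

/-- Mehler's formula. -/
theorem mehler_formula (x y ρ : ℝ) (hρ : |ρ| < 1) :
    ∑' k : ℕ, ρ ^ k / (2 ^ k * (Nat.factorial k : ℝ)) *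
        (hermiteH k).eval x * (hermiteH k).eval y =
      (Real.sqrt (1 - ρ ^ 2))⁻¹ *
        Real.exp (-(ρ ^ 2 * (x ^ 2 + y ^ 2) - 2 * ρ * x * y) / (1 - ρ ^ 2)) := by
  change mehlerKernel ρ x y = _
  rw [mehlerKernel_eq_mul_exp hρ x y, mehlerKernel_comm ρ 0 y, mehlerKernel_eq_mul_exp hρ y 0,
    mehlerKernel_zero_zero hρ, mul_assoc, ← Real.exp_add]
  congr 2
  ring
end

section
/- For fixed ℓ ∈ ℕ, as N → ∞, ∏_{i=N+1}^{N+ℓ} Γ(i/2) = (1 + O(N^{-1})) (2π)^{ℓ/2} 2^{-ℓ(ℓ-1)/4} (2e)^{-Nℓ/2} N^{Nℓ/2 + ℓ(ℓ-1)/4}. -/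
/-!
Write `log Γ(x) = (x - 1/2) log x - x + log (2π) / 2 + R(x)`. At a positive integer `n`,
`R(n) = log (stirlingSeq n / √π)`, which lies in `[0, 1/(12n)]` by Robbins' bound on the
Stirling sequence; the duplication formula `Γ(a) Γ(a + 1/2) = 2^(1-2a) √π Γ(2a)` carries an
`O(1/n)` bound over to `R(n/2)`. Expanding `log Γ(N/2 + s)` around `y = N/2` costs `O(s²/y)`,
and the expanded main terms for `s = 1/2, …, ℓ/2` add up exactly to the logarithm of the
approximant. Hence the two logarithms differ by `O(ℓ³/N)`, and exponentiating gives the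
relative error `O(1/N)`.
-/

open Real Finset Filter Topology Stirling

theorem abs_mul_log_one_add_div_sub_le {y s : ℝ} (hy : 0 < y) (hs : 0 ≤ s) :
    |(y + s - 1 / 2) * log (1 + s / y) - s| ≤ (s ^ 2 + s) / y := by
  obtain ⟨t, ht, rfl⟩ : ∃ t, 0 ≤ t ∧ s = t * y := ⟨s / y, by positivity, by field_simp⟩
  have hLle : log (1 + t) ≤ t := by linarith [log_le_sub_one_of_pos (x := 1 + t) (by positivity)]
  have hLge : 2 * t ≤ (t + 2) * log (1 + t) := by
    have := le_log_one_add_of_nonneg ht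
    rw [div_le_iff₀ (by positivity)] at this
    linarith
  rw [mul_div_cancel_right₀ _ hy.ne', show ((t * y) ^ 2 + t * y) / y = t ^ 2 * y + t by
    field_simp, abs_le]
  constructor
  · nlinarith [mul_le_mul_of_nonneg_left hLge hy.le, mul_le_mul_of_nonneg_left hLle hy.le]
  · nlinarith [mul_le_mul_of_nonneg_left hLle (by positivity : 0 ≤ y * (1 + t))]

theorem abs_sub_le_of_abs_log_sub_le {x y δ : ℝ} (hx : 0 < x) (hy : 0 < y)
    (h : |log x - log y| ≤ δ) (hδ : δ ≤ 1) : |x - y| ≤ 2 * δ * y := by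
  have hxy : x - y = y * (exp (log x - log y) - 1) := by
    rw [exp_sub, exp_log hx, exp_log hy]
    field_simp
  rw [hxy, abs_mul, abs_of_pos hy, mul_comm]
  gcongr
  exact (abs_exp_sub_one_le (h.trans hδ)).trans (by gcongr)

theorem prod_Icc_add_one_eq_prod_range {M : Type*} [CommMonoid M] (f : ℕ → M) (N ℓ : ℕ) :
    ∏ i ∈ Icc (N + 1) (N + ℓ), f i = ∏ j ∈ range ℓ, f (N + 1 + j) := by
  rw [← Finset.Ico_add_one_right_eq_Icc, prod_Ico_eq_prod_range,
    show N + ℓ + 1 - (N + 1) = ℓ by omega]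

theorem log_stirlingSeq_sub_log_sqrt_pi_le {n : ℕ} (hn : n ≠ 0) :
    log (stirlingSeq n) - log √π ≤ 1 / (12 * n) := by
  obtain ⟨n, rfl⟩ := Nat.exists_eq_succ_of_ne_zero hn
  -- Robbins' bound makes `f` increasing, and its limit is `log √π`.
  let f : ℕ → ℝ := fun m => log (stirlingSeq (m + 1)) - 1 / 12 * (1 / ((m : ℝ) + 1))
  have hf : Monotone f := monotone_nat_of_le_succ fun m => by
    have := log_stirlingSeq_sdiff_le (m + 1)
    have h : (1 : ℝ) / (12 * ((m + 1 : ℕ) : ℝ) * (((m + 1 : ℕ) : ℝ) + 1))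
        = 1 / 12 * (1 / ((m : ℝ) + 1)) - 1 / 12 * (1 / (((m + 1 : ℕ) : ℝ) + 1)) := by
      push_cast; field_simp; ring
    simp only [f]
    linarith
  have hlim : Tendsto f atTop (𝓝 (log √π - 1 / 12 * 0)) :=
    (((continuousAt_log (by positivity)).tendsto.comp
      (tendsto_stirlingSeq_sqrt_pi.comp (tendsto_add_atTop_nat 1))).sub
      ((tendsto_one_div_add_atTop_nhds_zero_nat (𝕜 := ℝ)).const_mul _))
  have := hf.ge_of_tendsto hlim n
  simp only [f, mul_zero, sub_zero] at this
  push_cast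
  field_simp at this ⊢
  linarith

noncomputable def stirlingRemainder (x : ℝ) : ℝ :=
  log (Gamma x) - ((x - 1 / 2) * log x - x + log (2 * π) / 2)

theorem stirlingRemainder_natCast {n : ℕ} (hn : n ≠ 0) :
    stirlingRemainder n = log (stirlingSeq n) - log √π := by
  have hn' : (0 : ℝ) < n := by positivity
  have hGamma : log (Gamma n) = log n.factorial - log n := by
    rw [← Gamma_nat_eq_factorial, Gamma_add_one hn'.ne',
      log_mul hn'.ne' (Gamma_pos_of_pos hn').ne']
    ring
  rw [stirlingRemainder, hGamma, log_stirlingSeq_formula, log_sqrt pi_pos.le,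
    log_mul two_ne_zero hn'.ne', log_mul two_ne_zero pi_ne_zero, log_div hn'.ne' (exp_ne_zero 1),
    log_exp]
  ring

theorem stirlingRemainder_natCast_nonneg {n : ℕ} (hn : n ≠ 0) : 0 ≤ stirlingRemainder n := by
  rw [stirlingRemainder_natCast hn, sub_nonneg]
  exact log_le_log (by positivity) (sqrt_pi_le_stirlingSeq hn)

theorem stirlingRemainder_natCast_le {n : ℕ} (hn : n ≠ 0) :
    stirlingRemainder n ≤ 1 / (12 * n) := by
  rw [stirlingRemainder_natCast hn]
  exact log_stirlingSeq_sub_log_sqrt_pi_le hn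

theorem abs_stirlingRemainder_natCast_le {n : ℕ} (hn : n ≠ 0) :
    |stirlingRemainder n| ≤ 1 / (12 * n) :=
  (abs_of_nonneg (stirlingRemainder_natCast_nonneg hn)).trans_le (stirlingRemainder_natCast_le hn)

/-- The Legendre duplication formula, in terms of the remainder. -/
theorem stirlingRemainder_add_half {a : ℝ} (ha : 0 < a) :
    stirlingRemainder (a + 1 / 2) =
      stirlingRemainder (2 * a) - stirlingRemainder a - (a * log (1 + 1 / (2 * a)) - 1 / 2) := by
  have hdup : log (Gamma (a + 1 / 2)) =
      log (Gamma (2 * a)) + (1 - 2 * a) * log 2 + log π / 2 - log (Gamma a) := by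
    have h := congrArg log (Gamma_mul_Gamma_add_half_of_pos ha)
    rw [log_mul (Gamma_pos_of_pos ha).ne' (Gamma_pos_of_pos (by positivity)).ne',
      log_mul (by positivity) (by positivity),
      log_mul (Gamma_pos_of_pos (by positivity)).ne' (by positivity), log_rpow two_pos,
      log_sqrt pi_pos.le] at h
    linarith
  have hlog : log (a + 1 / 2) = log a + log (1 + 1 / (2 * a)) := by
    rw [← log_mul ha.ne' (by positivity)]
    congr 1
    field_simp
  simp only [stirlingRemainder]
  rw [hdup, hlog, log_mul two_ne_zero ha.ne', log_mul two_ne_zero pi_ne_zero]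
  ring

theorem abs_stirlingRemainder_half_le {n : ℕ} (hn : 2 ≤ n) :
    |stirlingRemainder (n / 2)| ≤ 3 / n := by
  obtain ⟨a, rfl | rfl⟩ := Nat.even_or_odd' n
  · have ha : a ≠ 0 := by omega
    rw [show ((2 * a : ℕ) : ℝ) / 2 = a by push_cast; ring]
    refine (abs_stirlingRemainder_natCast_le ha).trans ?_
    have : (0 : ℝ) < a := by positivity
    rw [div_le_div_iff₀ (by positivity) (by positivity)]
    push_cast
    nlinarith
  · have ha : a ≠ 0 := by omega
    have ha₁ : (1 : ℝ) ≤ a := by exact_mod_cast Nat.one_le_iff_ne_zero.2 ha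
    have hlog : |a * log (1 + 1 / (2 * a)) - 1 / 2| ≤ 3 / (4 * a) := by
      have h := abs_mul_log_one_add_div_sub_le (y := a) (s := 1 / 2) (by positivity) (by norm_num)
      rwa [add_sub_cancel_right, div_div, show ((1 / 2 : ℝ) ^ 2 + 1 / 2) / a = 3 / (4 * a) by
        field_simp; norm_num] at h
    rw [show ((2 * a + 1 : ℕ) : ℝ) / 2 = a + 1 / 2 by push_cast; ring,
      stirlingRemainder_add_half (by positivity)]
    have hR2a := abs_stirlingRemainder_natCast_le (n := 2 * a) (by omega)
    have hRa := abs_stirlingRemainder_natCast_le ha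
    push_cast at hR2a ⊢
    calc _ ≤ |stirlingRemainder (2 * a)| + |stirlingRemainder a| +
          |a * log (1 + 1 / (2 * a)) - 1 / 2| :=
          (abs_sub _ _).trans (add_le_add_left (abs_sub _ _) _)
      _ ≤ 1 / (12 * (2 * a)) + 1 / (12 * a) + 3 / (4 * a) := by gcongr
      _ ≤ 3 / (2 * a + 1) := by
        rw [div_add_div _ _ (by positivity) (by positivity),
          div_add_div _ _ (by positivity) (by positivity),
          div_le_div_iff₀ (by positivity) (by positivity)]
        nlinarith [mul_le_mul_of_nonneg_left ha₁ (by positivity : (0 : ℝ) ≤ a ^ 2)]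

theorem abs_log_Gamma_add_sub_le {y s : ℝ} (hy : 0 < y) (hs : 0 ≤ s) :
    |log (Gamma (y + s)) - ((y + s - 1 / 2) * log y - y + log (2 * π) / 2)| ≤
      |stirlingRemainder (y + s)| + (s ^ 2 + s) / y := by
  have hsplit : log (Gamma (y + s)) - ((y + s - 1 / 2) * log y - y + log (2 * π) / 2) =
      stirlingRemainder (y + s) + ((y + s - 1 / 2) * log (1 + s / y) - s) := by
    rw [stirlingRemainder, show 1 + s / y = (y + s) / y by field_simp,
      log_div (by positivity) hy.ne']
    ring
  rw [hsplit]
  exact (abs_add_le _ _).trans (add_le_add_right (abs_mul_log_one_add_div_sub_le hy hs) _)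

theorem abs_log_Gamma_half_sub_le {N : ℕ} (hN : N ≠ 0) (j : ℕ) :
    |log (Gamma (((N + 1 + j : ℕ) : ℝ) / 2)) -
        ((N + j) / 2 * log (N / 2) - N / 2 + log (2 * π) / 2)| ≤ (j + 3) ^ 2 / N := by
  have h := abs_log_Gamma_add_sub_le (y := N / 2) (s := (j + 1) / 2) (by positivity) (by positivity)
  rw [show (N : ℝ) / 2 + (j + 1) / 2 - 1 / 2 = (N + j) / 2 by ring,
    show (N : ℝ) / 2 + (j + 1) / 2 = ((N + 1 + j : ℕ) : ℝ) / 2 by push_cast; ring,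
    show ((((j : ℝ) + 1) / 2) ^ 2 + (j + 1) / 2) / (N / 2) = (j + 1) * (j + 3) / 2 / N by
      field_simp; ring] at h
  have hR : |stirlingRemainder (((N + 1 + j : ℕ) : ℝ) / 2)| ≤ 3 / N :=
    (abs_stirlingRemainder_half_le (by omega)).trans (by gcongr; linarith)
  calc _ ≤ (3 : ℝ) / N + (j + 1) * (j + 3) / 2 / N := h.trans (add_le_add_left hR _)
    _ = (3 + (j + 1) * (j + 3) / 2) / N := by ring
    _ ≤ (j + 3) ^ 2 / N := by gcongr; nlinarith [(j.cast_nonneg : (0 : ℝ) ≤ j)]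

noncomputable def gammaProductApprox (ℓ N : ℕ) : ℝ :=
  (2 * π) ^ ((ℓ : ℝ) / 2) * (2 : ℝ) ^ (-((ℓ : ℝ) * ((ℓ : ℝ) - 1)) / 4) *
    (2 * exp 1) ^ (-((N : ℝ) * ℓ) / 2) * (N : ℝ) ^ ((N : ℝ) * ℓ / 2 + (ℓ : ℝ) * ((ℓ : ℝ) - 1) / 4)

theorem gammaProductApprox_pos (ℓ : ℕ) {N : ℕ} (hN : N ≠ 0) : 0 < gammaProductApprox ℓ N := by
  unfold gammaProductApprox
  positivity

theorem log_gammaProductApprox (ℓ : ℕ) {N : ℕ} (hN : N ≠ 0) :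
    log (gammaProductApprox ℓ N) =
      ∑ j ∈ range ℓ, ((N + j) / 2 * log (N / 2) - N / 2 + log (2 * π) / 2) := by
  have hN' : (0 : ℝ) < N := by positivity
  have hsum : ∑ j ∈ range ℓ, ((N : ℝ) + j) = N * ℓ + ℓ * (ℓ - 1) / 2 := by
    induction ℓ with
    | zero => simp
    | succ ℓ ih => rw [sum_range_succ, ih]; push_cast; ring
  simp only [sum_sub_distrib, sum_add_distrib, ← sum_div, ← sum_mul, hsum, sum_const, card_range,
    nsmul_eq_mul]
  rw [gammaProductApprox, log_mul (by positivity) (by positivity),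
    log_mul (by positivity) (by positivity), log_mul (by positivity) (by positivity),
    log_rpow (by positivity), log_rpow two_pos, log_rpow (by positivity), log_rpow hN',
    log_mul two_ne_zero (exp_pos 1).ne', log_exp, log_div hN'.ne' two_ne_zero]
  ring

theorem abs_log_prod_Gamma_sub_log_gammaProductApprox_le (ℓ : ℕ) {N : ℕ} (hN : N ≠ 0) :
    |log (∏ i ∈ Icc (N + 1) (N + ℓ), Gamma ((i : ℝ) / 2)) - log (gammaProductApprox ℓ N)| ≤
      ℓ * (ℓ + 2) ^ 2 / N := by
  rw [prod_Icc_add_one_eq_prod_range, log_prod fun j _ => (Gamma_pos_of_pos (by positivity)).ne',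
    log_gammaProductApprox ℓ hN, ← sum_sub_distrib]
  calc _ ≤ ∑ j ∈ range ℓ, ((ℓ : ℝ) + 2) ^ 2 / N := by
        refine (abs_sum_le_sum_abs _ _).trans (sum_le_sum fun j hj => ?_)
        refine (abs_log_Gamma_half_sub_le hN j).trans ?_
        have : (j : ℝ) + 3 ≤ ℓ + 2 := by exact_mod_cast (by grind : j + 3 ≤ ℓ + 2)
        gcongr
    _ = (ℓ : ℝ) * (ℓ + 2) ^ 2 / N := by rw [sum_const, card_range, nsmul_eq_mul, mul_div_assoc]

/-- For fixed `ℓ`,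
`∏_{i=N+1}^{N+ℓ} Γ(i/2) = (1+O(1/N)) (2π)^{ℓ/2} 2^{-ℓ(ℓ-1)/4} (2e)^{-Nℓ/2} N^{Nℓ/2+ℓ(ℓ-1)/4}`. -/
theorem gamma_product_asymptotic (ℓ : ℕ) :
    ∃ C > (0 : ℝ), ∃ N₀ : ℕ, ∀ N ≥ N₀,
      |(∏ i ∈ Finset.Icc (N + 1) (N + ℓ), Real.Gamma ((i : ℝ) / 2)) -
          (2 * Real.pi) ^ ((ℓ : ℝ) / 2) * (2 : ℝ) ^ (-((ℓ : ℝ) * ((ℓ : ℝ) - 1)) / 4) *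
            (2 * Real.exp 1) ^ (-((N : ℝ) * ℓ) / 2) *
            (N : ℝ) ^ ((N : ℝ) * ℓ / 2 + (ℓ : ℝ) * ((ℓ : ℝ) - 1) / 4)| ≤
        (C / N) * ((2 * Real.pi) ^ ((ℓ : ℝ) / 2) * (2 : ℝ) ^ (-((ℓ : ℝ) * ((ℓ : ℝ) - 1)) / 4) *
          (2 * Real.exp 1) ^ (-((N : ℝ) * ℓ) / 2) *
          (N : ℝ) ^ ((N : ℝ) * ℓ / 2 + (ℓ : ℝ) * ((ℓ : ℝ) - 1) / 4)) := by
  refine ⟨2 * ((ℓ : ℝ) + 2) ^ 3, by positivity, (ℓ + 2) ^ 3, fun N hN => ?_⟩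
  have hN₀ : ((ℓ : ℝ) + 2) ^ 3 ≤ N := by exact_mod_cast hN
  have hN' : (0 : ℝ) < N := lt_of_lt_of_le (by positivity) hN₀
  have hN0 : N ≠ 0 := by exact_mod_cast hN'.ne'
  have hlog := (abs_log_prod_Gamma_sub_log_gammaProductApprox_le ℓ hN0).trans
    (show (ℓ : ℝ) * (ℓ + 2) ^ 2 / N ≤ ((ℓ : ℝ) + 2) ^ 3 / N by gcongr; nlinarith)
  have hprod : 0 < ∏ i ∈ Icc (N + 1) (N + ℓ), Gamma ((i : ℝ) / 2) :=
    prod_pos fun i hi => Gamma_pos_of_pos (div_pos (Nat.cast_pos.2 (by grind)) two_pos)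
  have h := abs_sub_le_of_abs_log_sub_le hprod (gammaProductApprox_pos ℓ hN0) hlog
    ((div_le_one hN').2 hN₀)
  rwa [gammaProductApprox, ← mul_div_assoc] at h
end
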